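/- For every n ≥ 1, the set of real eigenvalues of the BBS translation transition operator M_B^{(n)} (i.e., the set of real λ with det(M_B^{(n)} − λ·Id) = 0) is exactly {1} ∪ { cos(pπ/q) : p, q ∈ ℕ, 1 ≤ p < q ≤ n+1 }. -/

import Mathlib

/-!
Conjugating by the Sylvester–Hadamard matrix `H` (with `H * H = 2 ^ n • 1`) turns `a + b` into
`2 ^ (n + 1)` times the matrix of the doubling map `i ↦ 2 i` on `{0, …, 2 ^ n - 1}`, so `M_B` is
similar to the simple random walk on the graph with edges `i — 2 i`. This graph consists of a
loop at `0`, which gives the eigenvalue `1`, and of the paths `o, 2 o, …, 2 ^ m o` for odd `o`,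
whose numbers of vertices `m + 1` range over `1, …, n`. Along such a path an eigenfunction
satisfies the Chebyshev recurrence, so the eigenvalues it carries are the roots
`cos (p π / (m + 2))` of `U_{m+1}`.
-/

open Matrix

/-- Equivalence identifying `Fin (2^n) ⊕ Fin (2^n)` with `Fin (2^(n+1))`. -/
def blockEquiv (n : ℕ) : Fin (2 ^ n) ⊕ Fin (2 ^ n) ≃ Fin (2 ^ (n + 1)) :=
  finSumFinEquiv.trans (finCongr (by rw [pow_succ, mul_two]))

/-- Assemble a `2^(n+1) × 2^(n+1)` matrix from four `2^n × 2^n` blocks. -/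
noncomputable def mkBlock {n : ℕ} (A B C D : Matrix (Fin (2 ^ n)) (Fin (2 ^ n)) ℝ) :
    Matrix (Fin (2 ^ (n + 1))) (Fin (2 ^ (n + 1))) ℝ :=
  Matrix.reindex (blockEquiv n) (blockEquiv n) (Matrix.fromBlocks A B C D)

/-- The pair of BBS translation generators. -/
noncomputable def abB : (n : ℕ) →
    Matrix (Fin (2 ^ n)) (Fin (2 ^ n)) ℝ × Matrix (Fin (2 ^ n)) (Fin (2 ^ n)) ℝ
  | 0 => (1, 1)
  | n + 1 => (mkBlock (abB n).1 (abB n).2 0 0, mkBlock 0 0 (abB n).1 (abB n).2)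

noncomputable def aB (n : ℕ) : Matrix (Fin (2 ^ n)) (Fin (2 ^ n)) ℝ := (abB n).1
noncomputable def bB (n : ℕ) : Matrix (Fin (2 ^ n)) (Fin (2 ^ n)) ℝ := (abB n).2

/-- The pair of lamplighter generators. -/
noncomputable def abL : (n : ℕ) →
    Matrix (Fin (2 ^ n)) (Fin (2 ^ n)) ℝ × Matrix (Fin (2 ^ n)) (Fin (2 ^ n)) ℝ
  | 0 => (1, 1)
  | n + 1 => (mkBlock 0 (abL n).2 (abL n).1 0, mkBlock (abL n).1 0 0 (abL n).2)

noncomputable def aL (n : ℕ) : Matrix (Fin (2 ^ n)) (Fin (2 ^ n)) ℝ := (abL n).1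
noncomputable def bL (n : ℕ) : Matrix (Fin (2 ^ n)) (Fin (2 ^ n)) ℝ := (abL n).2

/-- The BBS translation transition operator. -/
noncomputable def MB (n : ℕ) : Matrix (Fin (2 ^ n)) (Fin (2 ^ n)) ℝ :=
  (1 / 4 : ℝ) • (aB n + (aB n)ᵀ + bB n + (bB n)ᵀ)

/-- The lamplighter transition operator. -/
noncomputable def ML (n : ℕ) : Matrix (Fin (2 ^ n)) (Fin (2 ^ n)) ℝ :=
  (1 / 4 : ℝ) • (aL n + (aL n)ᵀ + bL n + (bL n)ᵀ)

namespace BBS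

open Matrix Polynomial Polynomial.Chebyshev

section Blocks

variable {n : ℕ} (A B C D A' B' C' D' : Matrix (Fin (2 ^ n)) (Fin (2 ^ n)) ℝ)

theorem mkBlock_add :
    mkBlock A B C D + mkBlock A' B' C' D' = mkBlock (A + A') (B + B') (C + C') (D + D') := by
  simp only [mkBlock, reindex_apply, ← fromBlocks_add]; rfl

theorem mkBlock_neg : -mkBlock A B C D = mkBlock (-A) (-B) (-C) (-D) := by
  simp only [mkBlock, reindex_apply, ← fromBlocks_neg]; rfl

theorem mkBlock_sub :
    mkBlock A B C D - mkBlock A' B' C' D' = mkBlock (A - A') (B - B') (C - C') (D - D') := by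
  simp only [sub_eq_add_neg, mkBlock_neg, mkBlock_add]

theorem mkBlock_smul (c : ℝ) :
    c • mkBlock A B C D = mkBlock (c • A) (c • B) (c • C) (c • D) := by
  simp only [mkBlock, reindex_apply, ← fromBlocks_smul]; rfl

theorem mkBlock_mul :
    mkBlock A B C D * mkBlock A' B' C' D' =
      mkBlock (A * A' + B * C') (A * B' + B * D') (C * A' + D * C') (C * B' + D * D') := by
  simp only [mkBlock, reindex_apply, submatrix_mul_equiv _ _ _ (blockEquiv n).symm,
    fromBlocks_multiply]

theorem mkBlock_transpose : (mkBlock A B C D)ᵀ = mkBlock Aᵀ Cᵀ Bᵀ Dᵀ := by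
  simp only [mkBlock, reindex_apply, transpose_submatrix, fromBlocks_transpose]

theorem mkBlock_one : mkBlock (1 : Matrix (Fin (2 ^ n)) (Fin (2 ^ n)) ℝ) 0 0 1 = 1 := by
  simp only [mkBlock, fromBlocks_one, reindex_apply, submatrix_one_equiv]

theorem mkBlock_apply (u v : Fin (2 ^ n) ⊕ Fin (2 ^ n)) :
    mkBlock A B C D (blockEquiv n u) (blockEquiv n v) = fromBlocks A B C D u v := by
  simp [mkBlock]

theorem conj_mkBlock_of_eq_rows (H : Matrix (Fin (2 ^ n)) (Fin (2 ^ n)) ℝ) :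
    mkBlock H H H (-H) * mkBlock A B A B * mkBlock H H H (-H) =
      (2 : ℝ) • mkBlock (H * (A + B) * H) (H * (A - B) * H) 0 0 := by
  rw [mkBlock_smul, mkBlock_mul, mkBlock_mul, smul_zero]
  congr 1 <;> first | (rw [two_smul]; noncomm_ring) | noncomm_ring

theorem conj_mkBlock_of_neg_rows (H : Matrix (Fin (2 ^ n)) (Fin (2 ^ n)) ℝ) :
    mkBlock H H H (-H) * mkBlock A B (-A) (-B) * mkBlock H H H (-H) =
      (2 : ℝ) • mkBlock 0 0 (H * (A + B) * H) (H * (A - B) * H) := by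
  rw [mkBlock_smul, mkBlock_mul, mkBlock_mul, smul_zero]
  congr 1 <;> first | (rw [two_smul]; noncomm_ring) | noncomm_ring

end Blocks

noncomputable def sylvesterHadamard : (n : ℕ) → Matrix (Fin (2 ^ n)) (Fin (2 ^ n)) ℝ
  | 0 => 1
  | n + 1 =>
    mkBlock (sylvesterHadamard n) (sylvesterHadamard n) (sylvesterHadamard n) (-sylvesterHadamard n)

theorem sylvesterHadamard_transpose : ∀ n, (sylvesterHadamard n)ᵀ = sylvesterHadamard n
  | 0 => transpose_one
  | n + 1 => by
    rw [sylvesterHadamard, mkBlock_transpose, transpose_neg, sylvesterHadamard_transpose n]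

theorem sylvesterHadamard_mul_self :
    ∀ n, sylvesterHadamard n * sylvesterHadamard n = (2 ^ n : ℝ) • 1
  | 0 => by simp [sylvesterHadamard]
  | n + 1 => by
    rw [sylvesterHadamard, mkBlock_mul, ← mkBlock_one, mkBlock_smul, smul_zero]
    simp only [mul_neg, neg_mul, neg_neg, add_neg_cancel, sylvesterHadamard_mul_self n,
      ← two_smul ℝ, smul_smul, pow_succ']

noncomputable def doublingMatrix (N : ℕ) : Matrix (Fin N) (Fin N) ℝ :=
  of fun i j => if (j : ℕ) = 2 * i then 1 else 0

noncomputable def carryDoublingMatrix (n : ℕ) : Matrix (Fin (2 ^ n)) (Fin (2 ^ n)) ℝ :=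
  of fun i j => if (j : ℕ) + 2 ^ n = 2 * i then 1 else 0

theorem blockEquiv_inl_val {n : ℕ} (u : Fin (2 ^ n)) : (blockEquiv n (.inl u) : ℕ) = u := by
  simp [blockEquiv]

theorem blockEquiv_inr_val {n : ℕ} (u : Fin (2 ^ n)) :
    (blockEquiv n (.inr u) : ℕ) = u + 2 ^ n := by
  simp [blockEquiv]

theorem doublingMatrix_two_pow_succ (n : ℕ) :
    doublingMatrix (2 ^ (n + 1)) =
      mkBlock (doublingMatrix (2 ^ n)) (carryDoublingMatrix n) 0 0 := by
  ext i j
  obtain ⟨u, rfl⟩ := (blockEquiv n).surjective i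
  obtain ⟨v, rfl⟩ := (blockEquiv n).surjective j
  rw [mkBlock_apply]
  rcases u with u | u <;> rcases v with v | v <;> have := u.isLt <;> have := v.isLt <;>
    simp [doublingMatrix, carryDoublingMatrix, blockEquiv_inl_val, blockEquiv_inr_val] <;>
    omega

theorem carryDoublingMatrix_succ (n : ℕ) :
    carryDoublingMatrix (n + 1) =
      mkBlock 0 0 (doublingMatrix (2 ^ n)) (carryDoublingMatrix n) := by
  ext i j
  obtain ⟨u, rfl⟩ := (blockEquiv n).surjective i
  obtain ⟨v, rfl⟩ := (blockEquiv n).surjective j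
  rw [mkBlock_apply]
  have h : 2 ^ (n + 1) = 2 * 2 ^ n := pow_succ' 2 n
  rcases u with u | u <;> rcases v with v | v <;> have := u.isLt <;> have := v.isLt <;>
    simp [doublingMatrix, carryDoublingMatrix, blockEquiv_inl_val, blockEquiv_inr_val, h] <;>
    (try split_ifs) <;> first | rfl | omega

theorem sylvesterHadamard_conj_aB_add_bB_and_aB_sub_bB :
    ∀ n, sylvesterHadamard n * (aB n + bB n) * sylvesterHadamard n =
        (2 ^ (n + 1) : ℝ) • doublingMatrix (2 ^ n) ∧
      sylvesterHadamard n * (aB n - bB n) * sylvesterHadamard n =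
        (2 ^ (n + 1) : ℝ) • carryDoublingMatrix n
  | 0 => by
    constructor <;> ext i j <;> fin_cases i <;> fin_cases j <;>
      simp [sylvesterHadamard, aB, bB, abB, doublingMatrix, carryDoublingMatrix,
        one_add_one_eq_two, ofNat_apply]
  | n + 1 => by
    obtain ⟨ih_add, ih_sub⟩ := sylvesterHadamard_conj_aB_add_bB_and_aB_sub_bB n
    have h_add : aB (n + 1) + bB (n + 1) = mkBlock (aB n) (bB n) (aB n) (bB n) := by
      simp only [aB, bB, abB, mkBlock_add, add_zero, zero_add]
    have h_sub : aB (n + 1) - bB (n + 1) = mkBlock (aB n) (bB n) (-aB n) (-bB n) := by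
      simp only [aB, bB, abB, mkBlock_sub, sub_zero, zero_sub]
    rw [h_add, h_sub, sylvesterHadamard, conj_mkBlock_of_eq_rows, conj_mkBlock_of_neg_rows,
      ih_add, ih_sub, doublingMatrix_two_pow_succ, carryDoublingMatrix_succ]
    simp only [mkBlock_smul, smul_zero, smul_smul, ← pow_succ', and_self]

noncomputable def doublingWalk (N : ℕ) : Matrix (Fin N) (Fin N) ℝ :=
  (1 / 2 : ℝ) • (doublingMatrix N + (doublingMatrix N)ᵀ)

theorem sylvesterHadamard_mul_MB_mul (n : ℕ) :
    sylvesterHadamard n * MB n * sylvesterHadamard n = (2 ^ n : ℝ) • doublingWalk (2 ^ n) := by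
  have h := (sylvesterHadamard_conj_aB_add_bB_and_aB_sub_bB n).1
  have hT : sylvesterHadamard n * (aB n + bB n)ᵀ * sylvesterHadamard n =
      (2 ^ (n + 1) : ℝ) • (doublingMatrix (2 ^ n))ᵀ := by
    simpa [Matrix.mul_assoc, sylvesterHadamard_transpose] using congrArg transpose h
  have hMB : MB n = (1 / 4 : ℝ) • ((aB n + bB n) + (aB n + bB n)ᵀ) := by
    rw [MB, transpose_add]; abel_nf
  rw [hMB, mul_smul_comm, smul_mul_assoc, mul_add, add_mul, h, hT, ← smul_add, smul_smul,
    doublingWalk, smul_smul]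
  congr 1
  ring

theorem det_sub_smul_one_eq_zero_iff_of_conj {ι K : Type*} [Fintype ι] [DecidableEq ι] [Field K]
    {A B H : Matrix ι ι K} {c : K} (hc : c ≠ 0) (hH : H * H = c • 1)
    (hconj : H * A * H = c • B) (x : K) : (A - x • 1).det = 0 ↔ (B - x • 1).det = 0 := by
  have key : H * (A - x • 1) * H = c • (B - x • 1) := by
    rw [mul_sub, sub_mul, hconj, mul_smul_comm, smul_mul_assoc, mul_one, hH, smul_sub, smul_comm]
  have hdet : H.det * (A - x • 1).det * H.det = c ^ Fintype.card ι * (B - x • 1).det := by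
    rw [← det_mul, ← det_mul, key, det_smul]
  have hH_det : H.det ≠ 0 := by
    intro h0
    have := congrArg det hH
    rw [det_mul, h0, zero_mul, det_smul, det_one, mul_one] at this
    exact pow_ne_zero _ hc this.symm
  calc (A - x • 1).det = 0 ↔ H.det * (A - x • 1).det * H.det = 0 := by simp [hH_det]
    _ ↔ (B - x • 1).det = 0 := by simp [hdet, hc]

theorem det_MB_sub_smul_one_eq_zero_iff (n : ℕ) (x : ℝ) :
    (MB n - x • 1).det = 0 ↔ (doublingWalk (2 ^ n) - x • 1).det = 0 :=
  det_sub_smul_one_eq_zero_iff_of_conj (by positivity) (sylvesterHadamard_mul_self n)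
    (sylvesterHadamard_mul_MB_mul n) x

def zeroExtend {N : ℕ} (f : Fin N → ℝ) (k : ℕ) : ℝ :=
  if h : k < N then f ⟨k, h⟩ else 0

theorem zeroExtend_val {N : ℕ} (f : Fin N → ℝ) (j : Fin N) : zeroExtend f j = f j := by
  simp [zeroExtend]

theorem doublingMatrix_mulVec {N : ℕ} (f : Fin N → ℝ) (i : Fin N) :
    (doublingMatrix N *ᵥ f) i = zeroExtend f (2 * i) := by
  simp only [mulVec, dotProduct, doublingMatrix, of_apply, ite_mul, one_mul, zero_mul,
    ← zeroExtend_val f]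
  rw [Fin.sum_univ_eq_sum_range (fun j => if j = 2 * (i : ℕ) then zeroExtend f j else 0),
    Finset.sum_ite_eq' (Finset.range N)]
  split_ifs with h
  · rfl
  · simp [zeroExtend, Finset.mem_range.not.1 h]

theorem doublingMatrix_transpose_mulVec {N : ℕ} (f : Fin N → ℝ) (i : Fin N) :
    ((doublingMatrix N)ᵀ *ᵥ f) i = if 2 ∣ (i : ℕ) then zeroExtend f (i / 2) else 0 := by
  simp only [mulVec, dotProduct, transpose_apply, doublingMatrix, of_apply, ite_mul, one_mul,
    zero_mul, ← zeroExtend_val f]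
  rw [Fin.sum_univ_eq_sum_range (fun j => if (i : ℕ) = 2 * j then zeroExtend f j else 0)]
  split_ifs with h
  · obtain ⟨k, hk⟩ := h
    have hkN : k < N := by omega
    simp only [hk, Nat.mul_left_cancel_iff two_pos, mul_div_cancel_left₀ k two_ne_zero]
    rw [Finset.sum_ite_eq (Finset.range N), if_pos (Finset.mem_range.2 hkN)]
  · exact Finset.sum_eq_zero fun j _ => if_neg fun hj => h ⟨j, hj⟩

theorem doublingWalk_mulVec {N : ℕ} (f : Fin N → ℝ) (i : Fin N) :
    (doublingWalk N *ᵥ f) i =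
      (zeroExtend f (2 * i) + if 2 ∣ (i : ℕ) then zeroExtend f (i / 2) else 0) / 2 := by
  rw [doublingWalk, smul_mulVec, add_mulVec, Pi.smul_apply, Pi.add_apply, doublingMatrix_mulVec,
    doublingMatrix_transpose_mulVec, smul_eq_mul]
  ring

def IsDoublingEigenfunction (N : ℕ) (x : ℝ) (F : ℕ → ℝ) : Prop :=
  (∀ k, N ≤ k → F k = 0) ∧
    ∀ i < N, F (2 * i) + (if 2 ∣ i then F (i / 2) else 0) = 2 * x * F i

theorem det_doublingWalk_sub_smul_one_eq_zero_iff {N : ℕ} {x : ℝ} :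
    (doublingWalk N - x • 1).det = 0 ↔ ∃ F, F ≠ 0 ∧ IsDoublingEigenfunction N x F := by
  rw [← exists_mulVec_eq_zero_iff]
  constructor
  · rintro ⟨f, hf, hfx⟩
    refine ⟨zeroExtend f, fun h0 => hf (funext fun i => ?_), fun k hk => dif_neg (by omega),
      fun i hi => ?_⟩
    · simpa [zeroExtend] using congrFun h0 i
    · have := congrFun hfx ⟨i, hi⟩
      rw [sub_mulVec, Pi.sub_apply, doublingWalk_mulVec, smul_mulVec, one_mulVec] at this
      simp only [Pi.smul_apply, smul_eq_mul, Pi.zero_apply] at this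
      rw [← zeroExtend_val f] at this
      linarith
  · rintro ⟨F, hF, hsupp, heq⟩
    have hext : zeroExtend (fun i : Fin N => F i) = F := by
      funext k
      by_cases hk : k < N
      · simp [zeroExtend, hk]
      · simp [zeroExtend, hk, hsupp k (by omega)]
    refine ⟨fun i => F i, fun h0 => hF (funext fun k => ?_), funext fun i => ?_⟩
    · by_cases hk : k < N
      · exact congrFun h0 ⟨k, hk⟩
      · exact hsupp k (by omega)
    · rw [sub_mulVec, Pi.sub_apply, doublingWalk_mulVec, smul_mulVec, one_mulVec, hext,
        heq i i.isLt]
      simp only [Pi.smul_apply, smul_eq_mul, Pi.zero_apply]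
      ring

theorem eq_eval_U_mul_of_recurrence {R : Type*} [CommRing R] {u : ℕ → R} {x : R} {m : ℕ}
    (h₀ : u 1 = 2 * x * u 0) (h : ∀ k < m, u (k + 2) = 2 * x * u (k + 1) - u k) :
    ∀ k ≤ m + 1, u k = (U R k).eval x * u 0
  | 0, _ => by simp
  | 1, _ => by simp [h₀]
  | k + 2, hk => by
    rw [h k (by omega), eq_eval_U_mul_of_recurrence h₀ h k (by omega),
      eq_eval_U_mul_of_recurrence h₀ h (k + 1) (by omega)]
    push_cast
    rw [U_add_two]
    simp only [eval_sub, eval_mul, eval_ofNat, eval_X]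
    ring

theorem eval_U_eq_zero_iff {m : ℕ} {x : ℝ} :
    (U ℝ m).eval x = 0 ↔
      ∃ p : ℕ, 1 ≤ p ∧ p ≤ m ∧ x = Real.cos (p * Real.pi / (m + 1)) := by
  rw [← IsRoot.def, ← mem_roots (U_ne_zero ℝ _ (by omega)), roots_U_real]
  simp only [Finset.mem_val, Finset.mem_image, Finset.mem_range]
  constructor
  · rintro ⟨k, hk, rfl⟩
    exact ⟨k + 1, by omega, by omega, by push_cast; rfl⟩
  · rintro ⟨p, hp1, hpm, rfl⟩
    exact ⟨p - 1, by omega, by rw [Nat.cast_pred hp1, sub_add_cancel]⟩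

section Eigenfunctions

variable {N o m : ℕ} {x : ℝ}

noncomputable def chainFunction (o m : ℕ) (x : ℝ) (j : ℕ) : ℝ :=
  ∑ k ∈ Finset.range (m + 1), if j = 2 ^ k * o then (U ℝ k).eval x else 0

theorem chainFunction_two_pow_mul (ho : 0 < o) (hU : (U ℝ (m + 1 : ℕ)).eval x = 0) {k : ℕ}
    (hk : k ≤ m + 1) : chainFunction o m x (2 ^ k * o) = (U ℝ k).eval x := by
  have hinj : ∀ j, 2 ^ k * o = 2 ^ j * o ↔ j = k := fun j => by
    rw [Nat.mul_left_inj ho.ne', Nat.pow_right_inj one_lt_two, eq_comm]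
  simp only [chainFunction, hinj, Finset.sum_ite_eq', Finset.mem_range]
  split_ifs with h
  · rfl
  · rw [show k = m + 1 by omega, hU]

theorem chainFunction_eq_zero {j : ℕ} (hj : ∀ k ≤ m, j ≠ 2 ^ k * o) :
    chainFunction o m x j = 0 :=
  Finset.sum_eq_zero fun k hk => if_neg (hj k (Finset.mem_range_succ_iff.1 hk))

theorem isDoublingEigenfunction_chainFunction (ho : Odd o) (hlt : 2 ^ m * o < N)
    (hle : N ≤ 2 ^ (m + 1) * o) (hU : (U ℝ (m + 1 : ℕ)).eval x = 0) :
    IsDoublingEigenfunction N x (chainFunction o m x) := by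
  have ho' : o % 2 = 1 := Nat.odd_iff.1 ho
  have hsucc : ∀ k, 2 ^ (k + 1) * o = 2 * (2 ^ k * o) := fun k => by ring
  refine ⟨fun j hj => chainFunction_eq_zero fun k hk h => ?_, fun i hi => ?_⟩
  · have := Nat.mul_le_mul_right o (Nat.pow_le_pow_right two_pos hk)
    omega
  by_cases hc : ∃ k ≤ m, i = 2 ^ k * o
  · obtain ⟨k, hk, rfl⟩ := hc
    rw [← hsucc, chainFunction_two_pow_mul ho.pos hU (Nat.le_succ_of_le hk),
      chainFunction_two_pow_mul ho.pos hU (by omega)]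
    cases k with
    | zero => simp [Nat.two_dvd_ne_zero.2 ho', U_one]
    | succ k =>
      rw [if_pos (by rw [hsucc]; exact dvd_mul_right 2 _), hsucc, Nat.mul_div_cancel_left _ two_pos,
        chainFunction_two_pow_mul ho.pos hU (by omega)]
      push_cast
      rw [show (k : ℤ) + 1 + 1 = k + 2 by ring, U_add_two]
      simp only [eval_sub, eval_mul, eval_ofNat, eval_X]
      ring
  push Not at hc
  have hdouble : chainFunction o m x (2 * i) = 0 := chainFunction_eq_zero fun k hk h => by
    cases k with
    | zero => rw [pow_zero, one_mul] at h; omega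
    | succ k => exact hc k (by omega) (by rw [hsucc] at h; omega)
  have hhalf : (if 2 ∣ i then chainFunction o m x (i / 2) else 0) = 0 := by
    split_ifs with h2
    · refine chainFunction_eq_zero fun k hk h => ?_
      have hi' : i = 2 ^ (k + 1) * o := by rw [hsucc]; omega
      rcases Nat.lt_or_ge k m with hkm | hkm
      · exact hc (k + 1) hkm hi'
      · obtain rfl : k = m := by omega
        omega
    · rfl
  rw [hdouble, hhalf, chainFunction_eq_zero hc, mul_zero, add_zero]

theorem IsDoublingEigenfunction.apply_two_pow_mul {F : ℕ → ℝ}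
    (hF : IsDoublingEigenfunction N x F) (ho : Odd o) (hlt : 2 ^ m * o < N) :
    ∀ j ≤ m + 1, F (2 ^ j * o) = (U ℝ j).eval x * F o := by
  have hsucc : ∀ k, 2 ^ (k + 1) * o = 2 * (2 ^ k * o) := fun k => by ring
  have hpath : ∀ j ≤ m, 2 ^ j * o < N := fun j hj =>
    lt_of_le_of_lt (Nat.mul_le_mul_right o (Nat.pow_le_pow_right two_pos hj)) hlt
  intro j hj
  have := eq_eval_U_mul_of_recurrence (u := fun l => F (2 ^ l * o)) (x := x) (m := m) ?_ ?_ j hj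
  · simpa using this
  · have := hF.2 (2 ^ 0 * o) (hpath 0 (Nat.zero_le m))
    rw [pow_zero, one_mul, if_neg (Nat.two_dvd_ne_zero.2 (Nat.odd_iff.1 ho)), add_zero] at this
    simpa [hsucc 0] using this
  · intro k hk
    have := hF.2 (2 ^ (k + 1) * o) (hpath (k + 1) hk)
    rw [if_pos (by rw [hsucc]; exact dvd_mul_right 2 _), hsucc k, Nat.mul_div_cancel_left _ two_pos,
      ← hsucc k, ← hsucc (k + 1)] at this
    linarith

theorem IsDoublingEigenfunction.exists_odd_eval_U_eq_zero {F : ℕ → ℝ}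
    (hF : IsDoublingEigenfunction N x F) {i : ℕ} (hi0 : i ≠ 0) (hFi : F i ≠ 0) :
    ∃ o m, Odd o ∧ 2 ^ m * o < N ∧ N ≤ 2 ^ (m + 1) * o ∧
      (U ℝ (m + 1 : ℕ)).eval x = 0 := by
  have hiN : i < N := by by_contra h; exact hFi (hF.1 i (by omega))
  obtain ⟨k, o, ho, rfl⟩ := Nat.exists_eq_two_pow_mul_odd hi0
  have hex : ∃ m, N ≤ 2 ^ (m + 1) * o :=
    ⟨N, by have := Nat.lt_two_pow_self (n := N + 1); nlinarith [ho.pos]⟩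
  -- the path through `i` is `o, 2 o, …, 2 ^ m o`
  set m := Nat.find hex
  have hle : N ≤ 2 ^ (m + 1) * o := Nat.find_spec hex
  have hlt : 2 ^ m * o < N := by
    rcases Nat.eq_zero_or_eq_succ_pred m with h | h
    · have := Nat.mul_le_mul_right o (Nat.one_le_two_pow (n := k))
      rw [h]; omega
    · rw [h]; exact not_le.1 (Nat.find_min hex (by omega))
  have hkm : k ≤ m := by
    by_contra h
    have := Nat.mul_le_mul_right o (Nat.pow_le_pow_right two_pos (show m + 1 ≤ k by omega))
    omega
  have hFo : F o ≠ 0 := fun h =>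
    hFi (by rw [hF.apply_two_pow_mul ho hlt k (by omega), h, mul_zero])
  have hend := hF.apply_two_pow_mul ho hlt (m + 1) le_rfl
  rw [hF.1 _ hle, eq_comm, mul_eq_zero] at hend
  exact ⟨o, m, ho, hlt, hle, hend.resolve_right hFo⟩

theorem isDoublingEigenfunction_single_zero (hN : 0 < N) :
    IsDoublingEigenfunction N 1 (Pi.single 0 1) := by
  refine ⟨fun k hk => Pi.single_eq_of_ne (by omega) _, fun i _ => ?_⟩
  rcases Nat.eq_zero_or_pos i with rfl | hi
  · norm_num
  · have h2 : (if 2 ∣ i then (Pi.single 0 1 : ℕ → ℝ) (i / 2) else 0) = 0 := by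
      split_ifs with h
      · exact Pi.single_eq_of_ne (by omega) _
      · rfl
    rw [h2, Pi.single_eq_of_ne (by omega), Pi.single_eq_of_ne hi.ne']
    norm_num

theorem IsDoublingEigenfunction.eq_one_of_apply_zero_ne_zero {F : ℕ → ℝ}
    (hF : IsDoublingEigenfunction N x F) (h0 : F 0 ≠ 0) : x = 1 := by
  have hN : 0 < N := Nat.pos_of_ne_zero fun h => h0 (hF.1 0 h.le)
  have := hF.2 0 hN
  simp only [mul_zero, dvd_zero, if_true, Nat.zero_div] at this
  exact mul_right_cancel₀ h0 (by linarith : x * F 0 = 1 * F 0)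

theorem exists_isDoublingEigenfunction_iff (hN : 0 < N) :
    (∃ F, F ≠ 0 ∧ IsDoublingEigenfunction N x F) ↔
      x = 1 ∨ ∃ o m, Odd o ∧ 2 ^ m * o < N ∧ N ≤ 2 ^ (m + 1) * o ∧
        (U ℝ (m + 1 : ℕ)).eval x = 0 := by
  constructor
  · rintro ⟨F, hF0, hF⟩
    obtain ⟨i, hi⟩ := Function.ne_iff.1 hF0
    rcases eq_or_ne i 0 with rfl | hi0
    · exact Or.inl (hF.eq_one_of_apply_zero_ne_zero hi)
    · exact Or.inr (hF.exists_odd_eval_U_eq_zero hi0 hi)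
  · rintro (rfl | ⟨o, m, ho, hlt, hle, hU⟩)
    · exact ⟨_, by simp, isDoublingEigenfunction_single_zero hN⟩
    · refine ⟨_, fun h => ?_, isDoublingEigenfunction_chainFunction ho hlt hle hU⟩
      have := congrFun h (2 ^ 0 * o)
      rw [chainFunction_two_pow_mul ho.pos hU (Nat.zero_le _)] at this
      simp at this

end Eigenfunctions

theorem exists_odd_two_pow_mul_lt_two_pow_iff {n m : ℕ} :
    (∃ o, Odd o ∧ 2 ^ m * o < 2 ^ n ∧ 2 ^ n ≤ 2 ^ (m + 1) * o) ↔ m < n := by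
  constructor
  · rintro ⟨o, ho, hlt, -⟩
    exact (Nat.pow_lt_pow_iff_right one_lt_two).1
      (lt_of_le_of_lt (Nat.le_mul_of_pos_right _ ho.pos) hlt)
  · intro hmn
    obtain ⟨d, rfl⟩ := Nat.exists_eq_add_of_lt hmn
    obtain ⟨c, hc⟩ : ∃ c, 2 ^ d = c + 1 :=
      ⟨2 ^ d - 1, (Nat.sub_add_cancel Nat.one_le_two_pow).symm⟩
    have ha : 0 < 2 ^ m := by positivity
    have hn : 2 ^ (m + d + 1) = 2 ^ m * (2 * (c + 1)) := by rw [← hc]; ring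
    -- `o = 2 ^ (n - m) - 1`
    refine ⟨2 * c + 1, odd_two_mul_add_one c, ?_, ?_⟩
    · rw [hn]; nlinarith
    · rw [hn, pow_succ]; nlinarith

end BBS

theorem bbs_eigenvalues_general (n : ℕ) :
    {x : ℝ | Matrix.det (MB n - x • (1 : Matrix (Fin (2 ^ n)) (Fin (2 ^ n)) ℝ)) = 0}
      = {1} ∪ {x : ℝ | ∃ p q : ℕ, 1 ≤ p ∧ p < q ∧ q ≤ n + 1 ∧
          x = Real.cos (p * Real.pi / q)} := by
  ext x
  simp only [Set.mem_ofPred_eq, Set.mem_union, Set.mem_singleton_iff]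
  rw [BBS.det_MB_sub_smul_one_eq_zero_iff, BBS.det_doublingWalk_sub_smul_one_eq_zero_iff,
    BBS.exists_isDoublingEigenfunction_iff (Nat.two_pow_pos n)]
  refine or_congr_right ⟨?_, ?_⟩
  · rintro ⟨o, m, ho, hlt, hle, hU⟩
    have hmn := BBS.exists_odd_two_pow_mul_lt_two_pow_iff.1 ⟨o, ho, hlt, hle⟩
    obtain ⟨p, hp, hpm, rfl⟩ := BBS.eval_U_eq_zero_iff.1 hU
    exact ⟨p, m + 2, hp, by omega, by omega, by push_cast; ring_nf⟩
  · rintro ⟨p, q, hp, hpq, hq, rfl⟩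
    obtain ⟨o, ho, hlt, hle⟩ :=
      BBS.exists_odd_two_pow_mul_lt_two_pow_iff.2 (show q - 2 < n by omega)
    refine ⟨o, q - 2, ho, hlt, hle, BBS.eval_U_eq_zero_iff.2 ⟨p, hp, by omega, ?_⟩⟩
    rw [show ((q - 2 + 1 : ℕ) : ℝ) + 1 = q by norm_cast; omega]

/-- For every `n ≥ 1`, the set of real eigenvalues of the BBS translation
transition operator `M_B⁽ⁿ⁾` is exactly `{1} ∪ {cos(pπ/q) : 1 ≤ p < q ≤ n+1}`. -/
theorem bbs_eigenvalues (n : ℕ) (hn : 1 ≤ n) :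
    {x : ℝ | Matrix.det (MB n - x • (1 : Matrix (Fin (2 ^ n)) (Fin (2 ^ n)) ℝ)) = 0}
      = {1} ∪ {x : ℝ | ∃ p q : ℕ, 1 ≤ p ∧ p < q ∧ q ≤ n + 1 ∧
          x = Real.cos (p * Real.pi / q)} :=
  bbs_eigenvalues_general n
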